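/- Let (E, λ) be an M-labeled event structure over a trace alphabet M = (Σ, I). Then the map v ↦ ⟨σ_v⟩ is a bijection from the set of vertices of G(E) (i.e., the set of configurations of E) onto the set of geodesic traces of (E, λ). -/

import Mathlib

/-- An event structure: a set of events with a causal partial order and a
conflict relation that is irreflexive, symmetric and hereditary, such that
every event has finitely many causes. -/
structure EventStructure (E : Type*) where
  le : E → E → Prop
  conflict : E → E → Prop
  le_refl : ∀ e, le e e
  le_trans : ∀ e₁ e₂ e₃, le e₁ e₂ → le e₂ e₃ → le e₁ e₃
  le_antisymm : ∀ e₁ e₂, le e₁ e₂ → le e₂ e₁ → e₁ = e₂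
  conflict_irrefl : ∀ e, ¬ conflict e e
  conflict_symm : ∀ e₁ e₂, conflict e₁ e₂ → conflict e₂ e₁
  conflict_le : ∀ e₁ e₂ e₃, conflict e₁ e₂ → le e₂ e₃ → conflict e₁ e₃
  finite_cause : ∀ e, Set.Finite {e' | le e' e}

namespace EventStructure

variable {E : Type*} (ES : EventStructure E)

/-- A configuration: a finite, downward-closed, conflict-free set of events. -/
abbrev IsConfig (c : Finset E) : Prop :=
  (∀ e ∈ c, ∀ e', ES.le e' e → e' ∈ c) ∧ ∀ e ∈ c, ∀ e' ∈ c, ¬ ES.conflict e e'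

/-- The type of configurations of an event structure. -/
abbrev Config : Type _ := {c : Finset E // ES.IsConfig c}

/-- `c'` is obtained from the configuration `c` by adding the single event `e`. -/
abbrev Extends (c c' : ES.Config) (e : E) : Prop :=
  e ∉ c.1 ∧ ∀ x, x ∈ c'.1 ↔ x = e ∨ x ∈ c.1

/-- `c'` is obtained from the configuration `c` by adding a single event. -/
abbrev Covers (c c' : ES.Config) : Prop := ∃ e, ES.Extends c c' e

/-- The (undirected) graph `G(E)` of the domain of an event structure:
vertices are configurations, edges join configurations differing in one event. -/
def configGraph : SimpleGraph ES.Config where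
  Adj c c' := ES.Covers c c' ∨ ES.Covers c' c
  symm := ⟨fun c c' h => Or.symm h⟩
  loopless := by
    constructor
    intro c h
    have key : ¬ ES.Covers c c := by
      rintro ⟨e, he, hmem⟩
      exact he ((hmem e).mpr (Or.inl rfl))
    exact h.elim key key

/-- The empty configuration, i.e. the basepoint `v₀` of the domain. -/
def emptyConfig : ES.Config :=
  ⟨∅, fun e he => absurd he (Finset.notMem_empty e),
      fun e he => absurd he (Finset.notMem_empty e)⟩

/-- Minimal conflict `e #_μ e'`. -/
abbrev MinConflict (e e' : E) : Prop :=
  ES.conflict e e' ∧ ¬ ∃ e'', e'' ≠ e ∧ e'' ≠ e' ∧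
    ((ES.le e'' e ∧ ES.conflict e'' e') ∨ (ES.le e'' e' ∧ ES.conflict e'' e))

/-- `e` is an immediate predecessor of `e'`. -/
abbrev ImmPred (e e' : E) : Prop :=
  ES.le e e' ∧ e ≠ e' ∧ ∀ e'', ES.le e e'' → ES.le e'' e' → e'' = e ∨ e'' = e'

/-- Two events are concurrent: order-incomparable and not in conflict. -/
abbrev Concurrent (e e' : E) : Prop :=
  ¬ ES.le e e' ∧ ¬ ES.le e' e ∧ ¬ ES.conflict e e'

/-- An event `e` is enabled at a configuration `c`. -/
abbrev Enabled (c : ES.Config) (e : E) : Prop := ∃ c' : ES.Config, ES.Extends c c' e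

end EventStructure

/-- The metric interval `I(u,v)` between two vertices of a graph. -/
abbrev mInterval {V : Type*} (G : SimpleGraph V) (u v : V) : Set V :=
  {x | G.dist u x + G.dist x v = G.dist u v}

open Classical in
/-- The label of the edge between two configurations (label of the unique event
in their symmetric difference). -/
noncomputable def stepLabel {E A : Type*} [Nonempty A] (lab : E → A)
    (c c' : Finset E) : A :=
  if h : ∃ e, (e ∈ c' ∧ e ∉ c) ∨ (e ∈ c ∧ e ∉ c') then lab h.choose
  else Classical.arbitrary A

/-- The word `σ(π)` of labels read along a walk of the domain graph. -/
noncomputable def walkWord {E A : Type*} [Nonempty A] {ES : EventStructure E}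
    (lab : E → A) {c c' : ES.Config} (p : ES.configGraph.Walk c c') : List A :=
  p.darts.map fun d => stepLabel lab d.toProd.1.1 d.toProd.2.1

/-- One elementary commutation step on words: exchange two adjacent independent
letters. -/
inductive SwapStep {A : Type*} (I : A → A → Prop) : List A → List A → Prop
  | swap (u v : List A) (a b : A) (h : I a b) :
      SwapStep I (u ++ a :: b :: v) (u ++ b :: a :: v)

/-- Mazurkiewicz trace equivalence `~_I`: the reflexive-transitive closure of
elementary commutations. -/
abbrev TraceEquiv {A : Type*} (I : A → A → Prop) : List A → List A → Prop :=
  Relation.ReflTransGen (SwapStep I)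

/-- `(ES, lab)` is an `M`-labeled event structure over the trace alphabet
`M = (A, I)` (axioms (LES1)-(LES3)). -/
structure IsTraceLabeling {E A : Type*} (ES : EventStructure E)
    (I : A → A → Prop) (lab : E → A) : Prop where
  les1 : ∀ e e', ES.MinConflict e e' → lab e ≠ lab e'
  les2 : ∀ e e', ES.ImmPred e e' ∨ ES.MinConflict e e' → ¬ I (lab e) (lab e')
  les3 : ∀ e e', ¬ I (lab e) (lab e') → ES.le e e' ∨ ES.le e' e ∨ ES.conflict e e'

section Aux

open SimpleGraph

attribute [local instance] Classical.propDecidable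

variable {E A : Type*} [Nonempty A] {ES : EventStructure E}

lemma adj_iff {c c' : ES.Config} :
    ES.configGraph.Adj c c' ↔ (ES.Covers c c' ∨ ES.Covers c' c) := Iff.rfl

lemma extends_mem_insert {c c' : ES.Config} {e : E} (h : ES.Extends c c' e) :
    c'.1 = insert e c.1 := by
  apply Finset.ext; intro x; rw [h.2 x, Finset.mem_insert]

lemma extends_card {c c' : ES.Config} {e : E} (h : ES.Extends c c' e) :
    c'.1.card = c.1.card + 1 := by
  rw [extends_mem_insert h, Finset.card_insert_of_notMem h.1]

lemma walk_card : ∀ {u v : ES.Config} (p : ES.configGraph.Walk u v),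
    v.1.card ≤ u.1.card + p.length ∧ u.1.card ≤ v.1.card + p.length := by
  intro u v p
  induction p with
  | nil => simp
  | cons h p ih =>
    rcases adj_iff.mp h with ⟨e, he⟩ | ⟨e, he⟩ <;> have hc := extends_card he <;>
      simp only [SimpleGraph.Walk.length_cons] <;> omega

lemma exists_maximal_event (ES : EventStructure E) :
    ∀ (s : Finset E), s.Nonempty → ∃ e ∈ s, ∀ x ∈ s, ES.le e x → x = e := by
  classical
  intro s
  induction s using Finset.strongInduction with
  | _ s ih =>
    intro hs
    obtain ⟨a, ha⟩ := hs
    by_cases hne : (s.filter (fun x => ES.le a x ∧ x ≠ a)).Nonempty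
    · have hts : s.filter (fun x => ES.le a x ∧ x ≠ a) ⊂ s := by
        refine Finset.ssubset_iff_of_subset (Finset.filter_subset _ _) |>.mpr ⟨a, ha, ?_⟩
        simp
      obtain ⟨e, het, hmax⟩ := ih _ hts hne
      have hmem := Finset.mem_filter.mp het
      refine ⟨e, hmem.1, ?_⟩
      intro x hx hex
      have hax : ES.le a x := ES.le_trans _ _ _ hmem.2.1 hex
      by_cases hxa : x = a
      · subst hxa
        exact absurd (ES.le_antisymm _ _ hex hmem.2.1) hmem.2.2
      · exact hmax x (Finset.mem_filter.mpr ⟨hx, hax, hxa⟩) hex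
    · refine ⟨a, ha, ?_⟩
      intro x hx hax
      by_contra hxa
      exact hne ⟨x, Finset.mem_filter.mpr ⟨hx, hax, fun h => hxa h⟩⟩

lemma erase_isConfig {v : ES.Config} {e : E}
    (hmax : ∀ x ∈ v.1, ES.le e x → x = e) :
    ES.IsConfig (v.1.erase e) := by
  constructor
  · intro a ha b hb
    have hav : a ∈ v.1 := Finset.mem_of_mem_erase ha
    have hbv : b ∈ v.1 := v.2.1 a hav b hb
    refine Finset.mem_erase.mpr ⟨?_, hbv⟩
    intro hbe; subst hbe
    exact (Finset.mem_erase.mp ha).1 (hmax a hav hb)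
  · intro a ha b hb
    exact v.2.2 a (Finset.mem_of_mem_erase ha) b (Finset.mem_of_mem_erase hb)

lemma build_walk (v : ES.Config) :
    ∃ p : ES.configGraph.Walk ES.emptyConfig v, p.length = v.1.card := by
  classical
  obtain ⟨n, hn⟩ : ∃ n, v.1.card = n := ⟨_, rfl⟩
  induction n using Nat.strong_induction_on generalizing v with
  | _ n ih =>
    rcases Nat.eq_zero_or_pos n with h0 | hpos
    · subst h0
      have hv : v = ES.emptyConfig := by
        apply Subtype.ext
        exact Finset.card_eq_zero.mp hn
      subst hv
      exact ⟨SimpleGraph.Walk.nil, by simpa using hn.symm⟩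
    · have hne : v.1.Nonempty := Finset.card_pos.mp (hn ▸ hpos)
      obtain ⟨e, hev, hmax⟩ := exists_maximal_event ES v.1 hne
      set c : ES.Config := ⟨v.1.erase e, erase_isConfig hmax⟩ with hc
      have hext : ES.Extends c v e := by
        refine ⟨Finset.notMem_erase e v.1, ?_⟩
        intro x
        constructor
        · intro hx
          by_cases hxe : x = e
          · exact Or.inl hxe
          · exact Or.inr (Finset.mem_erase.mpr ⟨hxe, hx⟩)
        · rintro (rfl | hx)
          · exact hev
          · exact Finset.mem_of_mem_erase hx
      have hcc : c.1.card = n - 1 := by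
        have := extends_card hext; omega
      obtain ⟨q, hq⟩ := ih (n - 1) (by omega) c hcc
      refine ⟨q.concat (adj_iff.mpr (Or.inl ⟨e, hext⟩)), ?_⟩
      rw [SimpleGraph.Walk.length_concat, hq, hcc, hn]
      omega

lemma dist_eq_card (v : ES.Config) :
    ES.configGraph.dist ES.emptyConfig v = v.1.card := by
  obtain ⟨p, hp⟩ := build_walk v
  refine le_antisymm (hp ▸ SimpleGraph.dist_le p) ?_
  have hr : ES.configGraph.Reachable ES.emptyConfig v := ⟨p⟩
  obtain ⟨q, hq⟩ := hr.exists_walk_length_eq_dist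
  have hb := (walk_card q).1
  have he : (ES.emptyConfig).1.card = 0 := rfl
  omega

lemma stepLabel_eq (lab : E → A) {c c' : ES.Config} {e : E} (h : ES.Extends c c' e) :
    stepLabel lab c.1 c'.1 = lab e := by
  have hex : ∃ x, (x ∈ c'.1 ∧ x ∉ c.1) ∨ (x ∈ c.1 ∧ x ∉ c'.1) :=
    ⟨e, Or.inl ⟨(h.2 e).mpr (Or.inl rfl), h.1⟩⟩
  rw [stepLabel, dif_pos hex]
  congr 1
  rcases hex.choose_spec with ⟨hm, hn⟩ | ⟨hm, hn⟩
  · rcases (h.2 _).mp hm with h1 | h1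
    · exact h1
    · exact absurd h1 hn
  · exact absurd ((h.2 _).mpr (Or.inr hm)) hn

lemma walkWord_nil (lab : E → A) {u : ES.Config} :
    walkWord lab (SimpleGraph.Walk.nil : ES.configGraph.Walk u u) = [] := rfl

lemma walkWord_cons (lab : E → A) {u w v : ES.Config} (h : ES.configGraph.Adj u w)
    (p : ES.configGraph.Walk w v) :
    walkWord lab (SimpleGraph.Walk.cons h p) = stepLabel lab u.1 w.1 :: walkWord lab p := rfl

lemma walkWord_concat (lab : E → A) {u w v : ES.Config} (p : ES.configGraph.Walk u w)
    (h : ES.configGraph.Adj w v) :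
    walkWord lab (p.concat h) = walkWord lab p ++ [stepLabel lab w.1 v.1] := by
  simp [walkWord, SimpleGraph.Walk.darts_concat]

lemma walkWord_length (lab : E → A) {u v : ES.Config} (p : ES.configGraph.Walk u v) :
    (walkWord lab p).length = p.length := by
  simp [walkWord]

lemma first_step {c₀ c₁ v : ES.Config} (h : ES.configGraph.Adj c₀ c₁)
    (p : ES.configGraph.Walk c₁ v) (hl : p.length + 1 + c₀.1.card = v.1.card) :
    (∃ e, ES.Extends c₀ c₁ e) ∧ p.length + c₁.1.card = v.1.card := by
  have hb := (walk_card p).1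
  rcases h with ⟨e, he⟩ | ⟨e, he⟩
  · have hc := extends_card he
    exact ⟨⟨e, he⟩, by omega⟩
  · have hc := extends_card he
    exfalso; omega

lemma walk_end {u v : ES.Config} (p : ES.configGraph.Walk u v) :
    p.length = 0 ∨ ∃ (w : ES.Config) (q : ES.configGraph.Walk u w)
      (h : ES.configGraph.Adj w v), p = q.concat h := by
  induction p using SimpleGraph.Walk.concatRec with
  | Hnil => exact Or.inl rfl
  | Hconcat q h ih => exact Or.inr ⟨_, q, h, rfl⟩

lemma shortest_decomp (lab : E → A) {v : ES.Config}
    (p : ES.configGraph.Walk ES.emptyConfig v) (hl : p.length = v.1.card)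
    (hne : v.1.card ≠ 0) :
    ∃ (c : ES.Config) (q : ES.configGraph.Walk ES.emptyConfig c) (e : E)
      (h : ES.configGraph.Adj c v),
      p = q.concat h ∧ q.length = c.1.card ∧ ES.Extends c v e ∧
      walkWord lab p = walkWord lab q ++ [lab e] := by
  rcases walk_end p with h0 | ⟨c, q, h, rfl⟩
  · omega
  · have hlen : q.length + 1 = v.1.card := by
      rw [← hl, SimpleGraph.Walk.length_concat]
    have hb := (walk_card q).1
    have he : (ES.emptyConfig).1.card = 0 := rfl
    rcases adj_iff.mp h with ⟨e, hext⟩ | ⟨e, hext⟩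
    · have hc := extends_card hext
      refine ⟨c, q, e, Or.inl ⟨e, hext⟩, rfl, by omega, hext, ?_⟩
      rw [walkWord_concat, stepLabel_eq lab hext]
    · have hc := extends_card hext
      exfalso; omega

section Labeled

variable {I : A → A → Prop} {lab : E → A}

lemma event_unique (hI_irrefl : ∀ a, ¬ I a a) (hlab : IsTraceLabeling ES I lab)
    {c v v' : ES.Config} {e f : E}
    (h1 : ES.Extends c v e) (h2 : ES.Extends c v' f) (hl : lab e = lab f) : e = f := by
  by_contra hne
  have hni : ¬ I (lab e) (lab f) := by rw [hl]; exact hI_irrefl _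
  have hev : e ∈ v.1 := (h1.2 e).mpr (Or.inl rfl)
  have hfv : f ∈ v'.1 := (h2.2 f).mpr (Or.inl rfl)
  rcases hlab.les3 e f hni with hle | hle | hcf
  · have hmem : e ∈ v'.1 := v'.2.1 f hfv e hle
    rcases (h2.2 e).mp hmem with h | h
    · exact hne h
    · exact h1.1 h
  · have hmem : f ∈ v.1 := v.2.1 e hev f hle
    rcases (h1.2 f).mp hmem with h | h
    · exact hne h.symm
    · exact h2.1 h
  · have hmin : ES.MinConflict e f := by
      refine ⟨hcf, ?_⟩
      rintro ⟨x, hxe, hxf, ⟨hxle, hxcf⟩ | ⟨hxle, hxcf⟩⟩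
      · have hxv : x ∈ v.1 := v.2.1 e hev x hxle
        have hxc : x ∈ c.1 := by
          rcases (h1.2 x).mp hxv with h | h
          · exact absurd h hxe
          · exact h
        exact v'.2.2 x ((h2.2 x).mpr (Or.inr hxc)) f hfv hxcf
      · have hxv : x ∈ v'.1 := v'.2.1 f hfv x hxle
        have hxc : x ∈ c.1 := by
          rcases (h2.2 x).mp hxv with h | h
          · exact absurd h hxf
          · exact h
        exact v.2.2 x ((h1.2 x).mpr (Or.inr hxc)) e hev hxcf
    exact hlab.les1 e f hmin hl

lemma word_determines (hI_irrefl : ∀ a, ¬ I a a) (hlab : IsTraceLabeling ES I lab) :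
    ∀ (n : ℕ) (v v' : ES.Config) (p : ES.configGraph.Walk ES.emptyConfig v)
      (q : ES.configGraph.Walk ES.emptyConfig v'),
      p.length = v.1.card → q.length = v'.1.card →
      walkWord lab p = walkWord lab q → v.1.card = n → v = v' := by
  intro n
  induction n using Nat.strong_induction_on with
  | _ n ih =>
    intro v v' p q hp hq hw hn
    have hlen : v.1.card = v'.1.card := by
      have h1 := walkWord_length lab p
      have h2 := walkWord_length lab q
      rw [hw] at h1
      omega
    rcases Nat.eq_zero_or_pos n with h0 | hpos
    · apply Subtype.ext
      have e1 : v.1 = ∅ := Finset.card_eq_zero.mp (hn.trans h0)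
      have e2 : v'.1 = ∅ := Finset.card_eq_zero.mp (by omega)
      rw [e1, e2]
    · obtain ⟨c, p', e, hadj, hpe, hp'len, hext, hpw⟩ :=
        shortest_decomp lab p hp (by omega)
      obtain ⟨c', q', f, hadj', hqe, hq'len, hext', hqw⟩ :=
        shortest_decomp lab q hq (by omega)
      rw [hpw, hqw] at hw
      obtain ⟨hw', hef⟩ := List.append_inj' hw rfl
      have hef : lab e = lab f := by simpa using hef
      have hcc : c.1.card = n - 1 := by
        have := extends_card hext; omega
      have hce : c = c' := by
        refine ih (n - 1) (by omega) c c' p' q' hp'len hq'len hw' hcc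
      subst hce
      have heqf : e = f := event_unique hI_irrefl hlab hext hext' hef
      subst heqf
      apply Subtype.ext
      rw [extends_mem_insert hext, extends_mem_insert hext']

lemma swapStep_append {w w' : List A} (h : SwapStep I w w') (s : List A) :
    SwapStep I (w ++ s) (w' ++ s) := by
  cases h with
  | swap u v a b hab =>
    have := SwapStep.swap (I := I) u (v ++ s) a b hab
    simpa [List.append_assoc] using this

lemma traceEquiv_append {w w' : List A} (h : TraceEquiv I w w') (s : List A) :
    TraceEquiv I (w ++ s) (w' ++ s) :=
  Relation.ReflTransGen.lift (fun l => l ++ s) (fun _ _ hab => swapStep_append hab s) _ _ h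

lemma traceEquiv_symm (hI_symm : ∀ a b, I a b → I b a) {w w' : List A}
    (h : TraceEquiv I w w') : TraceEquiv I w' w := by
  refine (@Relation.ReflTransGen.stdSymm _ _ ⟨?_⟩).symm _ _ h
  intro x y hxy
  cases hxy with
  | swap u v a b hab => exact SwapStep.swap u v b a (hI_symm a b hab)

lemma swap_walk (hlab : IsTraceLabeling ES I lab) :
    ∀ (u : List A) {c₀ v : ES.Config} (p : ES.configGraph.Walk c₀ v),
      p.length + c₀.1.card = v.1.card →
      ∀ (a b : A) (w' : List A), I a b → walkWord lab p = u ++ a :: b :: w' →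
      ∃ q : ES.configGraph.Walk c₀ v, q.length = p.length ∧
        walkWord lab q = u ++ b :: a :: w' := by
  classical
  intro u
  induction u with
  | nil =>
    intro c₀ v p hl a b w' hab hw
    cases p with
    | nil => simp [walkWord_nil] at hw
    | @cons _ c₁ _ h₁ p₁ =>
      cases p₁ with
      | nil => simp [walkWord_cons, walkWord_nil] at hw
      | @cons _ c₂ _ h₂ p₂ =>
        have hl1 : p₂.length + 1 + 1 + c₀.1.card = v.1.card := by
          simpa [Nat.add_assoc, Nat.add_comm, Nat.add_left_comm] using hl
        obtain ⟨⟨e, he1⟩, hl2⟩ := first_step h₁ (SimpleGraph.Walk.cons h₂ p₂)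
          (by simpa using hl1)
        obtain ⟨⟨f, he2⟩, hl3⟩ := first_step h₂ p₂ (by simpa using hl2)
        rw [walkWord_cons, walkWord_cons, stepLabel_eq lab he1, stepLabel_eq lab he2] at hw
        simp only [List.nil_append] at hw
        obtain ⟨hae, hw⟩ := List.cons.injEq .. ▸ hw
        obtain ⟨hbf, hw2⟩ := List.cons.injEq .. ▸ hw
        -- hae : lab e = a, hbf : lab f = b, hw2 : walkWord lab p₂ = w'
        have hec₁ : e ∈ c₁.1 := (he1.2 e).mpr (Or.inl rfl)
        have hfnc₁ : f ∉ c₁.1 := he2.1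
        have hnfe : f ≠ e := fun h => hfnc₁ (h ▸ hec₁)
        have henc₀ : e ∉ c₀.1 := he1.1
        have hfnc₀ : f ∉ c₀.1 := fun h => hfnc₁ ((he1.2 f).mpr (Or.inr h))
        have hIef : I (lab e) (lab f) := by rw [hae, hbf]; exact hab
        have hnfle : ¬ ES.le f e := fun h => hfnc₁ (c₁.2.1 e hec₁ f h)
        have hnelf : ¬ ES.le e f := by
          intro hle
          have himm : ES.ImmPred e f := by
            refine ⟨hle, fun h => hnfe h.symm, ?_⟩
            intro x hx1 hx2
            have hfc₂ : f ∈ c₂.1 := (he2.2 f).mpr (Or.inl rfl)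
            have hxc₂ : x ∈ c₂.1 := c₂.2.1 f hfc₂ x hx2
            rcases (he2.2 x).mp hxc₂ with h | h
            · exact Or.inr h
            · rcases (he1.2 x).mp h with h' | h'
              · exact Or.inl h'
              · exact absurd (c₀.2.1 x h' e hx1) henc₀
          exact absurd hIef (hlab.les2 e f (Or.inl himm))
        have hmemc₂ : ∀ x, x ∈ c₂.1 ↔ x = f ∨ x = e ∨ x ∈ c₀.1 := by
          intro x
          rw [he2.2 x, he1.2 x]
        have hsub : insert f c₀.1 ⊆ c₂.1 := by
          intro x hx
          rcases Finset.mem_insert.mp hx with rfl | hx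
          · exact (hmemc₂ x).mpr (Or.inl rfl)
          · exact (hmemc₂ x).mpr (Or.inr (Or.inr hx))
        have hcfg : ES.IsConfig (insert f c₀.1) := by
          constructor
          · intro x hx y hy
            have hyc₂ : y ∈ c₂.1 := c₂.2.1 x (hsub hx) y hy
            rcases (hmemc₂ y).mp hyc₂ with hyf | hye | hymem
            · subst hyf; exact Finset.mem_insert_self _ _
            · subst hye
              exfalso
              rcases Finset.mem_insert.mp hx with hxf | hxc
              · subst hxf; exact hnelf hy
              · exact henc₀ (c₀.2.1 x hxc y hy)
            · exact Finset.mem_insert_of_mem hymem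
          · intro x hx y hy
            exact c₂.2.2 x (hsub hx) y (hsub hy)
        set c₁' : ES.Config := ⟨insert f c₀.1, hcfg⟩ with hc₁'
        have he1' : ES.Extends c₀ c₁' f := by
          refine ⟨hfnc₀, ?_⟩
          intro x
          exact Finset.mem_insert
        have he2' : ES.Extends c₁' c₂ e := by
          refine ⟨?_, ?_⟩
          · intro hx
            rcases Finset.mem_insert.mp hx with h | h
            · exact hnfe h.symm
            · exact henc₀ h
          · intro x
            rw [hmemc₂ x]
            simp only [c₁', Finset.mem_insert]
            tauto
        refine ⟨SimpleGraph.Walk.cons (adj_iff.mpr (Or.inl ⟨f, he1'⟩))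
          (SimpleGraph.Walk.cons (adj_iff.mpr (Or.inl ⟨e, he2'⟩)) p₂), by simp, ?_⟩
        rw [walkWord_cons, walkWord_cons, stepLabel_eq lab he1', stepLabel_eq lab he2',
          hae, hbf, hw2]
        simp
  | cons x u' ih =>
    intro c₀ v p hl a b w' hab hw
    cases p with
    | nil => simp [walkWord_nil] at hw
    | @cons _ c₁ _ h₁ p₁ =>
      obtain ⟨⟨e, he1⟩, hl2⟩ := first_step h₁ p₁ (by
        simpa [Nat.add_comm, Nat.add_assoc, Nat.add_left_comm] using hl)
      rw [walkWord_cons] at hw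
      simp only [List.cons_append] at hw
      obtain ⟨hx, hw1⟩ := List.cons.injEq .. ▸ hw
      obtain ⟨q₁, hq₁len, hq₁w⟩ := ih p₁ hl2 a b w' hab hw1
      refine ⟨SimpleGraph.Walk.cons h₁ q₁, by simp [hq₁len], ?_⟩
      rw [walkWord_cons, hq₁w, hx]
      simp

lemma trace_walk (hlab : IsTraceLabeling ES I lab) {v : ES.Config}
    (p : ES.configGraph.Walk ES.emptyConfig v) (hl : p.length = v.1.card)
    {w : List A} (h : TraceEquiv I (walkWord lab p) w) :
    ∃ q : ES.configGraph.Walk ES.emptyConfig v, q.length = v.1.card ∧ walkWord lab q = w := by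
  induction h with
  | refl => exact ⟨p, hl, rfl⟩
  | tail h1 h2 ih =>
    obtain ⟨q, hq1, hq2⟩ := ih
    cases h2 with
    | swap u s a b hab =>
      have he : (ES.emptyConfig).1.card = 0 := rfl
      obtain ⟨q', hq'len, hq'w⟩ := swap_walk hlab u q (by omega) a b s hab hq2
      exact ⟨q', by omega, hq'w⟩

lemma geodesics_equiv (hI_symm : ∀ a b, I a b → I b a) (hlab : IsTraceLabeling ES I lab) :
    ∀ (n : ℕ) (v : ES.Config), v.1.card = n →
      ∀ (p q : ES.configGraph.Walk ES.emptyConfig v),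
        p.length = v.1.card → q.length = v.1.card →
        TraceEquiv I (walkWord lab p) (walkWord lab q) := by
  classical
  intro n
  induction n using Nat.strong_induction_on with
  | _ n ih =>
    intro v hn p q hp hq
    rcases Nat.eq_zero_or_pos n with h0 | hpos
    · have e1 : walkWord lab p = [] := List.length_eq_zero_iff.mp (by rw [walkWord_length]; omega)
      have e2 : walkWord lab q = [] := List.length_eq_zero_iff.mp (by rw [walkWord_length]; omega)
      rw [e1, e2]
    · obtain ⟨cp, p', e, hadjp, hpe, hp'len, hextp, hpw⟩ :=
        shortest_decomp lab p hp (by omega)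
      obtain ⟨cq, q', f, hadjq, hqe, hq'len, hextq, hqw⟩ :=
        shortest_decomp lab q hq (by omega)
      have hev : e ∈ v.1 := (hextp.2 e).mpr (Or.inl rfl)
      have hfv : f ∈ v.1 := (hextq.2 f).mpr (Or.inl rfl)
      have hcard : cp.1.card = n - 1 := by have := extends_card hextp; omega
      have hcardq : cq.1.card = n - 1 := by have := extends_card hextq; omega
      have hmaxe : ∀ x ∈ v.1, ES.le e x → x = e := by
        intro x hx hle
        by_contra hxe
        have hxc : x ∈ cp.1 := by
          rcases (hextp.2 x).mp hx with h | h
          · exact absurd h hxe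
          · exact h
        exact hextp.1 (cp.2.1 x hxc e hle)
      have hmaxf : ∀ x ∈ v.1, ES.le f x → x = f := by
        intro x hx hle
        by_contra hxf
        have hxc : x ∈ cq.1 := by
          rcases (hextq.2 x).mp hx with h | h
          · exact absurd h hxf
          · exact h
        exact hextq.1 (cq.2.1 x hxc f hle)
      by_cases hef : e = f
      · subst hef
        have hcc : cp = cq := by
          apply Subtype.ext
          apply Finset.ext
          intro x
          constructor
          · intro hx
            have hxv : x ∈ v.1 := (hextp.2 x).mpr (Or.inr hx)
            rcases (hextq.2 x).mp hxv with h | h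
            · exact absurd (h ▸ hx) hextp.1
            · exact h
          · intro hx
            have hxv : x ∈ v.1 := (hextq.2 x).mpr (Or.inr hx)
            rcases (hextp.2 x).mp hxv with h | h
            · exact absurd (h ▸ hx) hextq.1
            · exact h
        subst hcc
        rw [hpw, hqw]
        exact traceEquiv_append (ih (n-1) (by omega) cp hcard p' q' hp'len hq'len) _
      · -- two distinct maximal events
        have hIef : I (lab e) (lab f) := by
          by_contra hni
          rcases hlab.les3 e f hni with hle | hle | hcf
          · exact hef (hmaxe f hfv hle).symm
          · exact hef (hmaxf e hev hle)
          · exact v.2.2 e hev f hfv hcf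
        -- c₀ = v minus {e, f}
        have hcfg0 : ES.IsConfig ((v.1.erase e).erase f) := by
          constructor
          · intro x hx y hy
            have hxv : x ∈ v.1 := Finset.mem_of_mem_erase (Finset.mem_of_mem_erase hx)
            have hyv : y ∈ v.1 := v.2.1 x hxv y hy
            refine Finset.mem_erase.mpr ⟨?_, Finset.mem_erase.mpr ⟨?_, hyv⟩⟩
            · intro hyf; subst hyf
              have := hmaxf x hxv hy
              exact (Finset.mem_erase.mp hx).1 this
            · intro hye; subst hye
              have := hmaxe x hxv hy
              exact (Finset.mem_erase.mp (Finset.mem_of_mem_erase hx)).1 this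
          · intro x hx y hy
            exact v.2.2 x (Finset.mem_of_mem_erase (Finset.mem_of_mem_erase hx))
              y (Finset.mem_of_mem_erase (Finset.mem_of_mem_erase hy))
        set c₀ : ES.Config := ⟨(v.1.erase e).erase f, hcfg0⟩ with hc₀
        have hmem0 : ∀ x, x ∈ c₀.1 ↔ x ∈ v.1 ∧ x ≠ e ∧ x ≠ f := by
          intro x
          simp only [hc₀, Finset.mem_erase]
          tauto
        have hmemp : ∀ x, x ∈ cp.1 ↔ x ∈ v.1 ∧ x ≠ e := by
          intro x
          constructor
          · intro hx
            refine ⟨(hextp.2 x).mpr (Or.inr hx), ?_⟩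
            intro h; subst h; exact hextp.1 hx
          · rintro ⟨hxv, hxe⟩
            rcases (hextp.2 x).mp hxv with h | h
            · exact absurd h hxe
            · exact h
        have hmemq : ∀ x, x ∈ cq.1 ↔ x ∈ v.1 ∧ x ≠ f := by
          intro x
          constructor
          · intro hx
            refine ⟨(hextq.2 x).mpr (Or.inr hx), ?_⟩
            intro h; subst h; exact hextq.1 hx
          · rintro ⟨hxv, hxf⟩
            rcases (hextq.2 x).mp hxv with h | h
            · exact absurd h hxf
            · exact h
        have hext0p : ES.Extends c₀ cp f := by
          refine ⟨fun h => ((hmem0 f).mp h).2.2 rfl, ?_⟩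
          intro x
          rw [hmemp x, hmem0 x]
          constructor
          · rintro ⟨hxv, hxe⟩
            by_cases hxf : x = f
            · exact Or.inl hxf
            · exact Or.inr ⟨hxv, hxe, hxf⟩
          · rintro (rfl | ⟨hxv, hxe, _⟩)
            · exact ⟨hfv, fun h => hef h.symm⟩
            · exact ⟨hxv, hxe⟩
        have hext0q : ES.Extends c₀ cq e := by
          refine ⟨fun h => ((hmem0 e).mp h).2.1 rfl, ?_⟩
          intro x
          rw [hmemq x, hmem0 x]
          constructor
          · rintro ⟨hxv, hxf⟩
            by_cases hxe : x = e
            · exact Or.inl hxe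
            · exact Or.inr ⟨hxv, hxe, hxf⟩
          · rintro (rfl | ⟨hxv, _, hxf⟩)
            · exact ⟨hev, hef⟩
            · exact ⟨hxv, hxf⟩
        obtain ⟨r₀, hr₀⟩ := build_walk c₀
        have hc₀card : c₀.1.card = n - 2 := by
          have h1 := extends_card hext0p
          omega
        -- walk to cp ending with f, walk to cq ending with e
        have hsp := r₀.concat (adj_iff.mpr (Or.inl ⟨f, hext0p⟩))
        have hsq := r₀.concat (adj_iff.mpr (Or.inl ⟨e, hext0q⟩))
        have hsplen : (r₀.concat (adj_iff.mpr (Or.inl ⟨f, hext0p⟩) : ES.configGraph.Adj c₀ cp)).length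
            = cp.1.card := by
          rw [SimpleGraph.Walk.length_concat, hr₀, extends_card hext0p]
        have hsqlen : (r₀.concat (adj_iff.mpr (Or.inl ⟨e, hext0q⟩) : ES.configGraph.Adj c₀ cq)).length
            = cq.1.card := by
          rw [SimpleGraph.Walk.length_concat, hr₀, extends_card hext0q]
        have hspw : walkWord lab (r₀.concat (adj_iff.mpr (Or.inl ⟨f, hext0p⟩) : ES.configGraph.Adj c₀ cp))
            = walkWord lab r₀ ++ [lab f] := by
          rw [walkWord_concat, stepLabel_eq lab hext0p]
        have hsqw : walkWord lab (r₀.concat (adj_iff.mpr (Or.inl ⟨e, hext0q⟩) : ES.configGraph.Adj c₀ cq))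
            = walkWord lab r₀ ++ [lab e] := by
          rw [walkWord_concat, stepLabel_eq lab hext0q]
        -- chain of equivalences
        have h1 : TraceEquiv I (walkWord lab p') (walkWord lab r₀ ++ [lab f]) := by
          rw [← hspw]
          exact ih (n-1) (by omega) cp hcard p' _ hp'len hsplen
        have h2 : TraceEquiv I (walkWord lab r₀ ++ [lab e]) (walkWord lab q') := by
          rw [← hsqw]
          exact ih (n-1) (by omega) cq hcardq _ q' hsqlen hq'len
        rw [hpw, hqw]
        have step1 : TraceEquiv I (walkWord lab p' ++ [lab e])
            ((walkWord lab r₀ ++ [lab f]) ++ [lab e]) := traceEquiv_append h1 _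
        have step2 : TraceEquiv I ((walkWord lab r₀ ++ [lab f]) ++ [lab e])
            ((walkWord lab r₀ ++ [lab e]) ++ [lab f]) := by
          have hswap : SwapStep I (walkWord lab r₀ ++ lab f :: lab e :: [])
              (walkWord lab r₀ ++ lab e :: lab f :: []) :=
            SwapStep.swap _ [] (lab f) (lab e) (hI_symm _ _ hIef)
          have := Relation.ReflTransGen.single hswap
          simpa [List.append_assoc] using this
        have step3 : TraceEquiv I ((walkWord lab r₀ ++ [lab e]) ++ [lab f])
            (walkWord lab q' ++ [lab f]) := traceEquiv_append h2 _
        exact (step1.trans step2).trans step3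

end Labeled

end Aux


/-- The map `v ↦ ⟨σ_v⟩` is a bijection from the set of
vertices of `G(E)` (configurations of `E`) onto the set of geodesic traces. -/
theorem stmt3 {E A : Type*} [Fintype A] [Nonempty A]
    (ES : EventStructure E) (I : A → A → Prop)
    (hI_irrefl : ∀ a, ¬ I a a) (hI_symm : ∀ a b, I a b → I b a)
    (lab : E → A) (hlab : IsTraceLabeling ES I lab) :
    Set.BijOn
      (fun v : ES.Config =>
        {w : List A | ∃ p : ES.configGraph.Walk ES.emptyConfig v,
          p.length = ES.configGraph.dist ES.emptyConfig v ∧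
          TraceEquiv I (walkWord lab p) w})
      Set.univ
      {T : Set (List A) | ∃ (v : ES.Config)
          (p : ES.configGraph.Walk ES.emptyConfig v),
        p.length = ES.configGraph.dist ES.emptyConfig v ∧
        T = {w : List A | TraceEquiv I (walkWord lab p) w}} := by
    classical
  have hdist : ∀ v : ES.Config, ES.configGraph.dist ES.emptyConfig v = v.1.card :=
    fun v => dist_eq_card v
  refine ⟨?_, ?_, ?_⟩
  · -- MapsTo
    intro v _
    obtain ⟨p, hp⟩ := build_walk v
    have hp' : p.length = ES.configGraph.dist ES.emptyConfig v := by rw [hdist]; exact hp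
    refine ⟨v, p, hp', ?_⟩
    ext w
    simp only [Set.mem_setOf_eq]
    constructor
    · rintro ⟨p', hp'len, hw⟩
      exact (geodesics_equiv hI_symm hlab v.1.card v rfl p p' hp
        (by rw [← hdist]; exact hp'len)).trans hw
    · intro hw
      exact ⟨p, hp', hw⟩
  · -- InjOn
    intro v _ v' _ h
    obtain ⟨p, hp⟩ := build_walk v
    have hp' : p.length = ES.configGraph.dist ES.emptyConfig v := by rw [hdist]; exact hp
    have hmem : walkWord lab p ∈ (fun v : ES.Config =>
        {w : List A | ∃ p : ES.configGraph.Walk ES.emptyConfig v,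
          p.length = ES.configGraph.dist ES.emptyConfig v ∧
          TraceEquiv I (walkWord lab p) w}) v' := by
      rw [← h]
      exact ⟨p, hp', Relation.ReflTransGen.refl⟩
    obtain ⟨p₂, hl₂, heq⟩ := hmem
    obtain ⟨q, hqlen, hqw⟩ := trace_walk hlab p₂ (by rw [← hdist]; exact hl₂) heq
    exact (word_determines hI_irrefl hlab v'.1.card v' v q p hqlen hp hqw rfl).symm
  · -- SurjOn
    rintro T ⟨v, p, hlen, rfl⟩
    refine ⟨v, Set.mem_univ v, ?_⟩
    ext w
    simp only [Set.mem_setOf_eq]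
    constructor
    · rintro ⟨p', hp'len, hw⟩
      exact (geodesics_equiv hI_symm hlab v.1.card v rfl p p'
        (by rw [← hdist]; exact hlen) (by rw [← hdist]; exact hp'len)).trans hw
    · intro hw
      exact ⟨p, hlen, hw⟩
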